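/- arXiv:2003.14055 — 5 statements merged into one kernel-verified Lean document; each statement's English description precedes it below -/
import Mathlib

section
/- Let X be a compact Hausdorff totally disconnected space, let n ≥ 1 be a natural number, and let A₁,…,Aₙ and B₁,…,Bₙ be clopen subsets of X such that for every x ∈ X the number of indices i with x ∈ Aᵢ equals the number of indices i with x ∈ Bᵢ. Then, regarding Fin n as a discrete space, there exists a homeomorphism h from the subspace {(x,i) ∈ X × Fin n | x ∈ Aᵢ} onto the subspace {(x,i) ∈ X × Fin n | x ∈ Bᵢ} which preserves the first coordinate, i.e. (h(x,i)).1 = x for all (x,i) in the domain. -/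
/-!
Over each point `x` the fibres `{i | x ∈ Aᵢ}` and `{i | x ∈ Bᵢ}` have the same cardinality, so
some permutation of the indices carries the first onto the second. Choosing this permutation as
a function of the pair of fibres only, it depends locally constantly on `x`, because the sets are
clopen; the fibrewise permutation is then a homeomorphism of `X × Fin n` restricting to the
required one.
-/

open Equiv

theorem Equiv.Perm.exists_forall_iff_of_card_eq {ι : Type*} [Finite ι] {p q : ι → Prop}
    (h : Nat.card {i // p i} = Nat.card {i // q i}) : ∃ π : Perm ι, ∀ i, p i ↔ q (π i) := by
  classical
  obtain ⟨e⟩ := Finite.card_eq.1 h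
  exact ⟨e.extendSubtype, fun i =>
    ⟨e.extendSubtype_mem i, not_imp_not.1 (e.extendSubtype_not_mem i)⟩⟩

section LocallyConstant

variable {X : Type*} [TopologicalSpace X]

theorem IsClopen.isLocallyConstant_mem {U : Set X} (hU : IsClopen U) :
    IsLocallyConstant (· ∈ U) := by
  refine (IsLocallyConstant.iff_eventually_eq _).2 fun x => ?_
  by_cases hx : x ∈ U
  · filter_upwards [hU.isOpen.mem_nhds hx] with y hy
    simp [hx, hy]
  · filter_upwards [hU.compl.isOpen.mem_nhds hx] with y hy
    simp_all

theorem isLocallyConstant_mem_of_isClopen {ι : Type*} [Finite ι] {A : ι → Set X}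
    (hA : ∀ i, IsClopen (A i)) : IsLocallyConstant fun x i => x ∈ A i :=
  (LocallyConstant.unflip fun i => ⟨(· ∈ A i), (hA i).isLocallyConstant_mem⟩).isLocallyConstant

variable {ι : Type*} [TopologicalSpace ι] [DiscreteTopology ι]

theorem IsLocallyConstant.continuous_uncurry_apply {π : X → Perm ι} (hπ : IsLocallyConstant π) :
    Continuous fun p : X × ι => π p.1 p.2 :=
  (((hπ.comp_continuous continuous_fst).prodMk
    ((IsLocallyConstant.iff_continuous _).2 continuous_snd)).comp
    fun q : Perm ι × ι => q.1 q.2).continuous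

def IsLocallyConstant.prodShearHomeomorph {π : X → Perm ι} (hπ : IsLocallyConstant π) :
    X × ι ≃ₜ X × ι where
  toEquiv := (Equiv.refl X).prodShear π
  continuous_toFun := continuous_fst.prodMk hπ.continuous_uncurry_apply
  continuous_invFun := continuous_fst.prodMk (hπ.comp Equiv.symm).continuous_uncurry_apply

end LocallyConstant

theorem stmt0_general {X : Type*} [TopologicalSpace X] (n : ℕ)
    (A B : Fin n → Set X) (hA : ∀ i, IsClopen (A i)) (hB : ∀ i, IsClopen (B i))
    (hcard : ∀ x : X,
      Nat.card {i : Fin n // x ∈ A i} = Nat.card {i : Fin n // x ∈ B i}) :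
    ∃ h : {p : X × Fin n // p.1 ∈ A p.2} ≃ₜ {p : X × Fin n // p.1 ∈ B p.2},
      ∀ p : {p : X × Fin n // p.1 ∈ A p.2}, ((h p : X × Fin n)).1 = (p : X × Fin n).1 := by
  have hperm : ∀ p q : Fin n → Prop, ∃ π : Perm (Fin n),
      Nat.card {i // p i} = Nat.card {i // q i} → ∀ i, p i ↔ q (π i) := fun p q => by
    by_cases h : Nat.card {i // p i} = Nat.card {i // q i}
    · obtain ⟨π, hπ⟩ := Perm.exists_forall_iff_of_card_eq h
      exact ⟨π, fun _ => hπ⟩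
    · exact ⟨1, fun h' => absurd h' h⟩
  choose σ hσ using hperm
  have hπ : IsLocallyConstant fun x => σ (fun i => x ∈ A i) (fun i => x ∈ B i) :=
    (isLocallyConstant_mem_of_isClopen hA).comp₂ (isLocallyConstant_mem_of_isClopen hB) σ
  exact ⟨hπ.prodShearHomeomorph.subtype fun p => hσ _ _ (hcard p.1) p.2, fun _ => rfl⟩

/-- **Cancellation for elementary groupoids `X × 𝓡ₙ`.**
If `X` is a compact Hausdorff totally disconnected space, `n ≥ 1`, and
`A₁,…,Aₙ`, `B₁,…,Bₙ` are clopen subsets of `X` such that for every `x ∈ X`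
the number of indices `i` with `x ∈ Aᵢ` equals the number of indices `i` with
`x ∈ Bᵢ`, then there is a homeomorphism between the subspaces
`{(x,i) | x ∈ Aᵢ}` and `{(x,i) | x ∈ Bᵢ}` of `X × Fin n` (with `Fin n`
discrete) preserving the first coordinate. -/
theorem stmt0 {X : Type*} [TopologicalSpace X] [CompactSpace X] [T2Space X]
    [TotallyDisconnectedSpace X] (n : ℕ) (hn : 1 ≤ n)
    (A B : Fin n → Set X) (hA : ∀ i, IsClopen (A i)) (hB : ∀ i, IsClopen (B i))
    (hcard : ∀ x : X,
      Nat.card {i : Fin n // x ∈ A i} = Nat.card {i : Fin n // x ∈ B i}) :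
    ∃ h : {p : X × Fin n // p.1 ∈ A p.2} ≃ₜ {p : X × Fin n // p.1 ∈ B p.2},
      ∀ p : {p : X × Fin n // p.1 ∈ A p.2}, ((h p : X × Fin n)).1 = (p : X × Fin n).1 :=
  stmt0_general n A B hA hB hcard
end

section
/- Let E be a directed graph and let w be a vertex of E such that the set of loops at w (edges e with s(e) = r(e) = w) is infinite, and such that for every vertex v of E there exists an edge with source w and range v. Let μ and μ′ be paths in E with r(μ) = r(μ′) = w and of equal length. Let P and Q be finite sets of positive integers, and for each k ∈ Q ∪ {0} ∪ P let mₖ be a positive integer and let v_{k,1},…,v_{k,mₖ} be vertices of E. Then there exists a natural number N with N ≥ q for every q ∈ Q such that: (1) there exist paths γ⁰_{k,i} (for k ∈ Q ∪ {0} ∪ P and 1 ≤ i ≤ mₖ), each of length N, with source s(μ) and range v_{k,i}, each having μ as a prefix, and pairwise distinct; (2) there exist paths γ_{p,i,j} (for p ∈ P, 1 ≤ i ≤ m_p, 1 ≤ j ≤ p), where γ_{p,i,j} has length N + j, source s(μ′) and range v_{p,i}, each having μ′ as a prefix, and such that no two distinct ones are comparable in the prefix order; (3) there exist paths γ_{q,i,l}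 (for q ∈ Q, 1 ≤ i ≤ m_q, 1 ≤ l ≤ q), where γ_{q,i,l} has length N − l, source s(μ′) and range v_{q,i}, each having μ′ as a prefix, and such that no two distinct ones are comparable in the prefix order. -/
/-- A path in a directed graph with vertex type `V`, edge type `E₁` and source
and range maps `σ, ρ : E₁ → V`, from the vertex `u` to the vertex `v`, recorded
by its list of edges (vertices are paths of length `0`). -/
structure GPath (V E₁ : Type*) (σ ρ : E₁ → V) (u v : V) where
  /-- the list of edges traversed -/
  edges : List E₁
  /-- consecutive edges are composable -/
  chain : edges.Chain' fun e f => ρ e = σ f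
  /-- the first edge starts at `u` -/
  src : ∀ e ∈ edges.head?, σ e = u
  /-- the last edge ends at `v` -/
  rng : ∀ e ∈ edges.getLast?, ρ e = v
  /-- a path of length `0` has equal endpoints -/
  nil_eq : edges = [] → u = v


/-!
Fix an injective sequence of loops `ℓ c` at `w`. For every code `c`, padding `n` and target `x`,
the path `ℓ c ^ (n + 1)` followed by an edge from `w` to `x` has length `n + 2` and starts
with `ℓ c`, so two such paths are comparable in the prefix order only if they carry the same
code. Appending them to `μ` or `μ′` with codes `⟨k, i⟩`, `⟨p, i, j⟩`, `⟨q, i, l⟩` (via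
`Nat.pair`) and paddings `S`, `S + j`, `S - l`, where `S = max Q`, gives the three families
with `N = |μ| + S + 2`.
-/

namespace GPath

variable {V E₁ : Type*} {σ ρ : E₁ → V}

def nil (u : V) : GPath V E₁ σ ρ u u where
  edges := []
  chain := List.isChain_nil
  src := by simp
  rng := by simp
  nil_eq _ := rfl

def ofEdge {u v : V} (e : E₁) (hs : σ e = u) (hr : ρ e = v) : GPath V E₁ σ ρ u v where
  edges := [e]
  chain := List.isChain_singleton e
  src := by simpa using hs
  rng := by simpa using hr
  nil_eq := by simp

def append {u v x : V} (p : GPath V E₁ σ ρ u v) (q : GPath V E₁ σ ρ v x) :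
    GPath V E₁ σ ρ u x where
  edges := p.edges ++ q.edges
  chain := p.chain.append q.chain fun a ha b hb => (p.rng a ha).trans (q.src b hb).symm
  src a ha := by
    rcases hp : p.edges with _ | ⟨b, l⟩
    · rw [hp, List.nil_append] at ha
      exact (q.src a ha).trans (p.nil_eq hp).symm
    · rw [hp, List.cons_append, List.head?_cons] at ha
      exact p.src a (by simp [hp, ha])
  rng a ha := by
    rcases hq : q.edges.getLast? with _ | b
    · rw [List.getLast?_eq_none_iff] at hq
      rw [List.getLast?_append, hq] at ha
      exact (p.rng a (by simpa using ha)).trans (q.nil_eq hq)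
    · rw [List.getLast?_append, hq] at ha
      exact q.rng a (by simpa [hq] using ha)
  nil_eq h := by
    rw [List.append_eq_nil_iff] at h
    exact (p.nil_eq h.1).trans (q.nil_eq h.2)

def replicate {w : V} (e : E₁) (hs : σ e = w) (hr : ρ e = w) : ℕ → GPath V E₁ σ ρ w w
  | 0 => nil w
  | n + 1 => (ofEdge e hs hr).append (replicate e hs hr n)

@[simp]
theorem append_edges {u v x : V} (p : GPath V E₁ σ ρ u v) (q : GPath V E₁ σ ρ v x) :
    (p.append q).edges = p.edges ++ q.edges := rfl

@[simp]
theorem ofEdge_edges {u v : V} (e : E₁) (hs : σ e = u) (hr : ρ e = v) :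
    (ofEdge e hs hr).edges = [e] := rfl

@[simp]
theorem replicate_edges {w : V} (e : E₁) (hs : σ e = w) (hr : ρ e = w) (n : ℕ) :
    (replicate e hs hr n).edges = List.replicate n e := by
  induction n with
  | zero => rfl
  | succ n ih => simp [replicate, ih, List.replicate_succ]

end GPath

open GPath

theorem exists_tails_separated_by_prefix {V E₁ : Type*} {σ ρ : E₁ → V} {w : V}
    (hloops : {e : E₁ | σ e = w ∧ ρ e = w}.Infinite)
    (hedges : ∀ v : V, ∃ e : E₁, σ e = w ∧ ρ e = v) :
    ∃ τ : ℕ → ℕ → (x : V) → GPath V E₁ σ ρ w x,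
      (∀ c n x, (τ c n x).edges.length = n + 2) ∧
      ∀ c c' n n' x x', (τ c n x).edges <+: (τ c' n' x').edges → c = c' := by
  let ℓ := hloops.natEmbedding
  choose ε hεs hεr using hedges
  refine ⟨fun c n x => (replicate (ℓ c).1 (ℓ c).2.1 (ℓ c).2.2 (n + 1)).append
    (ofEdge (ε x) (hεs x) (hεr x)), fun c n x => by simp, fun c c' n n' x x' h => ?_⟩
  simp only [append_edges, replicate_edges, List.replicate_succ, List.cons_append,
    List.cons_prefix_cons] at h
  exact ℓ.injective (Subtype.ext h.1)

theorem stmt1_general {V E₁ : Type*} (σ ρ : E₁ → V) (w : V)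
    (hloops : {e : E₁ | σ e = w ∧ ρ e = w}.Infinite)
    (hedges : ∀ v : V, ∃ e : E₁, σ e = w ∧ ρ e = v)
    {u u' : V} (μ : GPath V E₁ σ ρ u w) (μ' : GPath V E₁ σ ρ u' w)
    (hlen : μ.edges.length = μ'.edges.length)
    (P Q : Finset ℕ) (m : ℕ → ℕ)
    (v : (k : ℕ) → Fin (m k) → V) :
    ∃ N : ℕ, (∀ q ∈ Q, q ≤ N) ∧
      (∃ γ0 : (k : ℕ) → (i : Fin (m k)) → GPath V E₁ σ ρ u (v k i),
        (∀ k ∈ Q ∪ {0} ∪ P, ∀ i : Fin (m k),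
          (γ0 k i).edges.length = N ∧ μ.edges <+: (γ0 k i).edges) ∧
        (∀ k ∈ Q ∪ {0} ∪ P, ∀ k' ∈ Q ∪ {0} ∪ P,
          ∀ (i : Fin (m k)) (i' : Fin (m k')),
          (k ≠ k' ∨ (i : ℕ) ≠ (i' : ℕ)) → (γ0 k i).edges ≠ (γ0 k' i').edges)) ∧
      (∃ γP : (p : ℕ) → (i : Fin (m p)) → ℕ → GPath V E₁ σ ρ u' (v p i),
        (∀ p ∈ P, ∀ i : Fin (m p), ∀ j : ℕ, 1 ≤ j → j ≤ p →
          (γP p i j).edges.length = N + j ∧ μ'.edges <+: (γP p i j).edges) ∧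
        (∀ p ∈ P, ∀ p' ∈ P, ∀ (i : Fin (m p)) (i' : Fin (m p')), ∀ j j' : ℕ,
          1 ≤ j → j ≤ p → 1 ≤ j' → j' ≤ p' →
          (p ≠ p' ∨ (i : ℕ) ≠ (i' : ℕ) ∨ j ≠ j') →
          ¬ (γP p i j).edges <+: (γP p' i' j').edges)) ∧
      (∃ γQ : (q : ℕ) → (i : Fin (m q)) → ℕ → GPath V E₁ σ ρ u' (v q i),
        (∀ q ∈ Q, ∀ i : Fin (m q), ∀ l : ℕ, 1 ≤ l → l ≤ q →
          (γQ q i l).edges.length = N - l ∧ μ'.edges <+: (γQ q i l).edges) ∧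
        (∀ q ∈ Q, ∀ q' ∈ Q, ∀ (i : Fin (m q)) (i' : Fin (m q')), ∀ l l' : ℕ,
          1 ≤ l → l ≤ q → 1 ≤ l' → l' ≤ q' →
          (q ≠ q' ∨ (i : ℕ) ≠ (i' : ℕ) ∨ l ≠ l') →
          ¬ (γQ q i l).edges <+: (γQ q' i' l').edges)) := by
  obtain ⟨τ, hτlen, hτsep⟩ := exists_tails_separated_by_prefix hloops hedges
  have hsep : ∀ (base : List E₁) c c' n n' x x',
      base ++ (τ c n x).edges <+: base ++ (τ c' n' x').edges → c = c' :=
    fun base _ _ _ _ _ _ h => hτsep _ _ _ _ _ _ ((List.prefix_append_right_inj base).mp h)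
  set S := Q.sup id
  have hS : ∀ q ∈ Q, q ≤ S := fun q hq => Finset.le_sup (f := id) hq
  refine ⟨μ.edges.length + S + 2, fun q hq => (hS q hq).trans (by omega),
    ⟨fun k i => μ.append (τ (Nat.pair k i) S (v k i)), ?_, ?_⟩,
    ⟨fun p i j => μ'.append (τ (Nat.pair p (Nat.pair i j)) (S + j) (v p i)), ?_, ?_⟩,
    ⟨fun q i l => μ'.append (τ (Nat.pair q (Nat.pair i l)) (S - l) (v q i)), ?_, ?_⟩⟩
  · exact fun k _ i => ⟨by simp [hτlen]; omega, List.prefix_append _ _⟩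
  · intro k _ k' _ i i' hne heq
    have hcode := Nat.pair_eq_pair.mp (hsep _ _ _ _ _ _ _ ⟨[], (List.append_nil _).trans heq⟩)
    omega
  · exact fun p _ i j _ _ => ⟨by simp [hτlen, hlen]; omega, List.prefix_append _ _⟩
  · intro p _ p' _ i i' j j' _ _ _ _ hne h
    have hcode := Nat.pair_eq_pair.mp (hsep _ _ _ _ _ _ _ h)
    have hcode' := Nat.pair_eq_pair.mp hcode.2
    omega
  · intro q hq i l _ hl
    exact ⟨by simp [hτlen, hlen]; have := hS q hq; omega, List.prefix_append _ _⟩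
  · intro q _ q' _ i i' l l' _ _ _ _ hne h
    have hcode := Nat.pair_eq_pair.mp (hsep _ _ _ _ _ _ _ h)
    have hcode' := Nat.pair_eq_pair.mp hcode.2
    omega

/-- **The combinatorial core of Lemma 8.1 of the paper.** Let `E` be a directed
graph and `w` a vertex supporting infinitely many loops and emitting at least
one edge to every vertex. Let `μ, μ′` be paths of equal length with range `w`,
let `P, Q` be finite sets of positive integers, and for each
`k ∈ Q ∪ {0} ∪ P` let `m k > 0` and vertices `v k 1, …, v k (m k)` be given.
Then there is `N ≥ max Q` together with: (1) pairwise distinct paths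
`γ⁰_{k,i}` of length `N` from `s(μ)` to `v k i` extending `μ`; (2) paths
`γ_{p,i,j}` (`p ∈ P`, `1 ≤ j ≤ p`) of length `N + j` from `s(μ′)` to `v p i`
extending `μ′`, no two distinct ones comparable in the prefix order; (3) paths
`γ_{q,i,l}` (`q ∈ Q`, `1 ≤ l ≤ q`) of length `N − l` from `s(μ′)` to `v q i`
extending `μ′`, no two distinct ones comparable in the prefix order. -/
theorem stmt1 {V E₁ : Type*} (σ ρ : E₁ → V) (w : V)
    (hloops : {e : E₁ | σ e = w ∧ ρ e = w}.Infinite)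
    (hedges : ∀ v : V, ∃ e : E₁, σ e = w ∧ ρ e = v)
    {u u' : V} (μ : GPath V E₁ σ ρ u w) (μ' : GPath V E₁ σ ρ u' w)
    (hlen : μ.edges.length = μ'.edges.length)
    (P Q : Finset ℕ) (hP : ∀ p ∈ P, 0 < p) (hQ : ∀ q ∈ Q, 0 < q)
    (m : ℕ → ℕ) (hm : ∀ k ∈ Q ∪ {0} ∪ P, 0 < m k)
    (v : (k : ℕ) → Fin (m k) → V) :
    ∃ N : ℕ, (∀ q ∈ Q, q ≤ N) ∧
      (∃ γ0 : (k : ℕ) → (i : Fin (m k)) → GPath V E₁ σ ρ u (v k i),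
        (∀ k ∈ Q ∪ {0} ∪ P, ∀ i : Fin (m k),
          (γ0 k i).edges.length = N ∧ μ.edges <+: (γ0 k i).edges) ∧
        (∀ k ∈ Q ∪ {0} ∪ P, ∀ k' ∈ Q ∪ {0} ∪ P,
          ∀ (i : Fin (m k)) (i' : Fin (m k')),
          (k ≠ k' ∨ (i : ℕ) ≠ (i' : ℕ)) → (γ0 k i).edges ≠ (γ0 k' i').edges)) ∧
      (∃ γP : (p : ℕ) → (i : Fin (m p)) → ℕ → GPath V E₁ σ ρ u' (v p i),
        (∀ p ∈ P, ∀ i : Fin (m p), ∀ j : ℕ, 1 ≤ j → j ≤ p →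
          (γP p i j).edges.length = N + j ∧ μ'.edges <+: (γP p i j).edges) ∧
        (∀ p ∈ P, ∀ p' ∈ P, ∀ (i : Fin (m p)) (i' : Fin (m p')), ∀ j j' : ℕ,
          1 ≤ j → j ≤ p → 1 ≤ j' → j' ≤ p' →
          (p ≠ p' ∨ (i : ℕ) ≠ (i' : ℕ) ∨ j ≠ j') →
          ¬ (γP p i j).edges <+: (γP p' i' j').edges)) ∧
      (∃ γQ : (q : ℕ) → (i : Fin (m q)) → ℕ → GPath V E₁ σ ρ u' (v q i),
        (∀ q ∈ Q, ∀ i : Fin (m q), ∀ l : ℕ, 1 ≤ l → l ≤ q →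
          (γQ q i l).edges.length = N - l ∧ μ'.edges <+: (γQ q i l).edges) ∧
        (∀ q ∈ Q, ∀ q' ∈ Q, ∀ (i : Fin (m q)) (i' : Fin (m q')), ∀ l l' : ℕ,
          1 ≤ l → l ≤ q → 1 ≤ l' → l' ≤ q' →
          (q ≠ q' ∨ (i : ℕ) ≠ (i' : ℕ) ∨ l ≠ l') →
          ¬ (γQ q i l).edges <+: (γQ q' i' l').edges)) :=
  stmt1_general σ ρ w hloops hedges μ μ' hlen P Q m v
end

section
/- Let X be a locally compact Hausdorff topological space and give ℤ the discrete topology. Let C_c(X × ℤ, ℤ) and C_c(X, ℤ) denote the abelian groups of continuous compactly supported ℤ-valued functions. Define ρ_* : C_c(X × ℤ, ℤ) → C_c(X × ℤ, ℤ) by (ρ_* f)(x, m) = f(x, m−1), and π_* : C_c(X × ℤ, ℤ) → C_c(X, ℤ) by (π_* f)(x) = ∑_{m ∈ ℤ} f(x, m) (a finite sum, since the support of f is compact). Then: (i) id − ρ_* is injective; (ii) π_* is surjective; (iii) the kernel of π_* equals the range of id − ρ_*. In other words, 0 → C_c(X × ℤ, ℤ) → C_c(X × ℤ, ℤ) → C_c(X,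 ℤ) → 0 is a short exact sequence of abelian groups. -/
/-!
Fibrewise over each `x : X` this is the exact sequence `0 → ℤ[ℤ] → ℤ[ℤ] → ℤ → 0` of finitely
supported functions on `ℤ`: a function killed by `id - ρ` is `1`-periodic, hence zero; a function
of total sum zero is `g - ρ g` for its partial sums `g m = ∑_{k ≤ m} f k`; and a function on `X`
lifts along `π` by placing it on the slice `m = 0`. Compactness of the support bounds the slices
uniformly in `x`, which keeps the partial sums continuous and compactly supported.
-/

open scoped CompactlySupported

open Function Set

theorem Function.Periodic.eq_zero_of_support_finite {M : Type*} [Zero M] {h : ℤ → M}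
    (hp : Periodic h 1) (hfin : (support h).Finite) : h = 0 := by
  obtain ⟨n, hn⟩ := hfin.exists_notMem
  funext m
  calc h m = h (m * 1) := by rw [mul_one]
    _ = h (n * 1) := (hp.int_mul_eq m).trans (hp.int_mul_eq n).symm
    _ = 0 := by simpa using hn

section Primitive

variable {M : Type*} [AddCommGroup M] {h : ℤ → M} {a b : ℤ}

theorem sum_Icc_sub_sum_Icc_sub_one (ha : ∀ m < a, h m = 0) (m : ℤ) :
    ∑ k ∈ Finset.Icc a m, h k - ∑ k ∈ Finset.Icc a (m - 1), h k = h m := by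
  rcases le_or_gt a m with ham | ham
  · rw [← Finset.insert_Icc_sub_one_right_eq_Icc ham, Finset.sum_insert (by simp)]
    abel
  · simp [Finset.Icc_eq_empty_of_lt, ham, ha m ham, show m - 1 < a by omega]

theorem sum_Icc_eq_zero_of_notMem (hsupp : support h ⊆ Icc a b) (hsum : ∑ᶠ k, h k = 0)
    {m : ℤ} (hm : m ∉ Icc a b) : ∑ k ∈ Finset.Icc a m, h k = 0 := by
  rcases lt_or_ge m a with hma | hbm
  · simp [Finset.Icc_eq_empty_of_lt hma]
  · rw [← hsum, finsum_eq_sum_of_support_subset h (s := Finset.Icc a m)]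
    exact hsupp.trans (by simpa using Icc_subset_Icc_right (by grind))

end Primitive

namespace CompactlySupportedContinuousMap

variable {X M : Type*} [TopologicalSpace X] [TopologicalSpace M]

theorem exists_Icc_forall_support_subset [Zero M] (f : C_c(X × ℤ, M)) :
    ∃ a b : ℤ, ∀ x, support (fun m => f (x, m)) ⊆ Icc a b := by
  have hfin : (Prod.snd '' tsupport f).Finite :=
    (f.hasCompactSupport.image continuous_snd).finite_of_discrete
  obtain ⟨a, ha⟩ := hfin.bddBelow
  obtain ⟨b, hb⟩ := hfin.bddAbove
  refine ⟨a, b, fun x m hm => ?_⟩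
  have hm' : m ∈ Prod.snd '' tsupport f := ⟨(x, m), subset_tsupport _ hm, rfl⟩
  exact ⟨ha hm', hb hm'⟩

theorem eq_zero_of_apply_eq_apply_sub_one [Zero M] {d : C_c(X × ℤ, M)}
    (hd : ∀ x m, d (x, m) = d (x, m - 1)) : d = 0 := by
  obtain ⟨a, b, hab⟩ := d.exists_Icc_forall_support_subset
  ext ⟨x, m⟩
  have hp : Periodic (fun m => d (x, m)) 1 := fun m => by simpa using hd x (m + 1)
  exact congrFun (hp.eq_zero_of_support_finite ((finite_Icc a b).subset (hab x))) m

theorem continuous_sum_Icc [AddCommMonoid M] [ContinuousAdd M] (f : C_c(X × ℤ, M)) (a : ℤ) :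
    Continuous fun p : X × ℤ => ∑ k ∈ Finset.Icc a p.2, f (p.1, k) :=
  continuous_prod_of_discrete_right.mpr fun m =>
    continuous_finsetSum (Finset.Icc a m) fun k _ => f.continuous.comp (.prodMk_left k)

section T2

variable [T2Space X]

theorem hasCompactSupport_sum_Icc [AddCommGroup M] (f : C_c(X × ℤ, M)) {a b : ℤ}
    (hab : ∀ x, support (fun m => f (x, m)) ⊆ Icc a b) (hf : ∀ x, ∑ᶠ m, f (x, m) = 0) :
    HasCompactSupport fun p : X × ℤ => ∑ k ∈ Finset.Icc a p.2, f (p.1, k) := by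
  refine .intro ((f.hasCompactSupport.image continuous_fst).prod (finite_Icc a b).isCompact) ?_
  rintro ⟨x, m⟩ hxm
  by_cases hx : x ∈ Prod.fst '' tsupport f
  · exact sum_Icc_eq_zero_of_notMem (hab x) (hf x) fun hm => hxm ⟨hx, hm⟩
  · exact Finset.sum_eq_zero fun k _ =>
      notMem_support.mp fun hk => hx ⟨(x, k), subset_tsupport _ hk, rfl⟩

theorem exists_apply_eq_sub_apply_sub_one [AddCommGroup M] [ContinuousAdd M]
    (f : C_c(X × ℤ, M)) (hf : ∀ x, ∑ᶠ m, f (x, m) = 0) :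
    ∃ g : C_c(X × ℤ, M), ∀ x m, f (x, m) = g (x, m) - g (x, m - 1) := by
  obtain ⟨a, b, hab⟩ := f.exists_Icc_forall_support_subset
  refine ⟨⟨⟨_, f.continuous_sum_Icc a⟩, f.hasCompactSupport_sum_Icc hab hf⟩, fun x m => ?_⟩
  refine (sum_Icc_sub_sum_Icc_sub_one (h := fun k => f (x, k)) (fun k hk => ?_) m).symm
  exact notMem_support.mp fun hk' => (hab x hk').1.not_gt hk

def ofSliceZero [Zero M] (g : C_c(X, M)) : C_c(X × ℤ, M) where
  toFun p := if p.2 = 0 then g p.1 else 0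
  continuous_toFun := continuous_prod_of_discrete_right.mpr fun m => by
    by_cases hm : m = 0
    · simpa [hm] using g.continuous
    · simpa [hm] using continuous_const
  hasCompactSupport' := by
    refine .intro (g.hasCompactSupport.prod (isCompact_singleton (x := (0 : ℤ)))) ?_
    rintro ⟨x, m⟩ hxm
    by_cases hm : m = 0
    · subst hm
      simpa using image_eq_zero_of_notMem_tsupport (by simpa using hxm)
    · simp [hm]

theorem finsum_ofSliceZero_apply [AddCommMonoid M] (g : C_c(X, M)) (x : X) :
    ∑ᶠ m, ofSliceZero g (x, m) = g x :=
  (finsum_eq_single _ 0 fun _ hm => if_neg hm).trans (if_pos rfl)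

end T2

end CompactlySupportedContinuousMap

open CompactlySupportedContinuousMap

theorem stmt3_general {X : Type*} [TopologicalSpace X] [T2Space X]
    (ρ : C_c(X × ℤ, ℤ) →+ C_c(X × ℤ, ℤ))
    (hρ : ∀ (f : C_c(X × ℤ, ℤ)) (x : X) (m : ℤ), ρ f (x, m) = f (x, m - 1))
    (π : C_c(X × ℤ, ℤ) →+ C_c(X, ℤ))
    (hπ : ∀ (f : C_c(X × ℤ, ℤ)) (x : X), π f x = ∑ᶠ m : ℤ, f (x, m)) :
    Function.Injective (fun f : C_c(X × ℤ, ℤ) => f - ρ f) ∧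
    Function.Surjective π ∧
    ∀ f : C_c(X × ℤ, ℤ), π f = 0 ↔ ∃ g : C_c(X × ℤ, ℤ), f = g - ρ g := by
  have hπρ (g : C_c(X × ℤ, ℤ)) : π (ρ g) = π g := by
    ext x
    simp only [hπ, hρ]
    exact finsum_comp_equiv (Equiv.subRight (1 : ℤ)) (f := fun m => g (x, m))
  refine ⟨?_, fun g => ⟨ofSliceZero g, ext fun x => (hπ _ x).trans (finsum_ofSliceZero_apply g x)⟩,
    fun f => ⟨fun hf => ?_, ?_⟩⟩
  · refine (injective_iff_map_eq_zero (AddMonoidHom.id _ - ρ)).mpr fun d hd =>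
      eq_zero_of_apply_eq_apply_sub_one fun x m => ?_
    simpa [hρ, sub_eq_zero] using congrArg (· (x, m)) hd
  · obtain ⟨g, hg⟩ := f.exists_apply_eq_sub_apply_sub_one fun x => by rw [← hπ, hf]; rfl
    exact ⟨g, ext fun ⟨x, m⟩ => by simp [hρ, hg]⟩
  · rintro ⟨g, rfl⟩
    rw [map_sub, hπρ, sub_self]

/-- **The short exact sequence underlying Proposition 6.1 of the paper.**
Let `X` be a locally compact Hausdorff space, `ℤ` discrete. Let
`ρ_* : C_c(X × ℤ, ℤ) →+ C_c(X × ℤ, ℤ)` be given by `(ρ_* f)(x, m) = f (x, m − 1)`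
and `π_* : C_c(X × ℤ, ℤ) →+ C_c(X, ℤ)` by `(π_* f)(x) = ∑_{m ∈ ℤ} f (x, m)`.
Then `id − ρ_*` is injective, `π_*` is surjective, and the kernel of `π_*`
equals the range of `id − ρ_*`; i.e.
`0 → C_c(X × ℤ, ℤ) → C_c(X × ℤ, ℤ) → C_c(X, ℤ) → 0` is short exact. -/
theorem stmt3 {X : Type*} [TopologicalSpace X] [LocallyCompactSpace X] [T2Space X]
    (ρ : C_c(X × ℤ, ℤ) →+ C_c(X × ℤ, ℤ))
    (hρ : ∀ (f : C_c(X × ℤ, ℤ)) (x : X) (m : ℤ), ρ f (x, m) = f (x, m - 1))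
    (π : C_c(X × ℤ, ℤ) →+ C_c(X, ℤ))
    (hπ : ∀ (f : C_c(X × ℤ, ℤ)) (x : X), π f x = ∑ᶠ m : ℤ, f (x, m)) :
    Function.Injective (fun f : C_c(X × ℤ, ℤ) => f - ρ f) ∧
    Function.Surjective π ∧
    ∀ f : C_c(X × ℤ, ℤ), π f = 0 ↔ ∃ g : C_c(X × ℤ, ℤ), f = g - ρ g :=
  stmt3_general ρ hρ π hπ
end

section
/- Let X be a Hausdorff topological space that has a basis of clopen sets, and let Γ be a group of homeomorphisms of X. For a homeomorphism α of X and a clopen set Z ⊆ X with α(Z) ∩ Z = ∅, let τ_{α,Z} denote the homeomorphism of X equal to α on Z, equal to α⁻¹ on α(Z), and equal to the identity elsewhere. Let H be an abelian group and I : Γ → H a group homomorphism. Assume: (i) for every α ∈ Γ and every clopen Z ⊆ X with α(Z) ∩ Z = ∅, the map τ_{α,Z} belongs to Γ and I(τ_{α,Z}) = 0; (ii) every β ∈ Γ with I(β) = 0 whose support (the closure of {x ∈ X : β(x) ≠ x}) is a proper subset of X is a product of elements of the form τ_{α,Z} (with α ∈ Γ and Z clopen, α(Z) ∩ Z = ∅).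 Then every β ∈ Γ with I(β) = 0 is a product of elements of the form τ_{α,Z}. -/
/-- The group of self-homeomorphisms of a topological space,
with `a * b = b.trans a` (i.e. `a ∘ b`). -/
instance homeoGroup (X : Type*) [TopologicalSpace X] : Group (Homeomorph X X) where
  mul a b := b.trans a
  one := Homeomorph.refl X
  inv := Homeomorph.symm
  mul_assoc a b c := rfl
  one_mul a := Homeomorph.ext fun _ => rfl
  mul_one a := Homeomorph.ext fun _ => rfl
  inv_mul_cancel a := Homeomorph.ext fun x => a.symm_apply_apply x

/-- `τ` is the homeomorphism equal to `α` on `Z`, to `α⁻¹` on `α(Z)`, and to the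
identity elsewhere. -/
def PiecewiseSwap {X : Type*} [TopologicalSpace X] (α τ : Homeomorph X X) (Z : Set X) : Prop :=
  (∀ x ∈ Z, τ x = α x) ∧ (∀ x ∈ α '' Z, τ x = α.symm x) ∧
    ∀ x, x ∉ Z → x ∉ α '' Z → τ x = x

/-- `τ` is a transposition built from an element `α` of `Γ` and a clopen set `Z`
with `α(Z) ∩ Z = ∅`. -/
def IsTransp {X : Type*} [TopologicalSpace X] (Γ : Subgroup (Homeomorph X X))
    (τ : Homeomorph X X) : Prop :=
  ∃ α ∈ Γ, ∃ Z : Set X, IsClopen Z ∧ (α '' Z) ∩ Z = ∅ ∧ PiecewiseSwap α τ Z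

/-
Take `β ∈ ker I` moving some point `x`. Separating `x` from `β x` and shrinking to a basic
clopen set gives a clopen `Z ∋ x` with `β(Z) ∩ Z = ∅`. The transposition `τ = τ_{β,Z}` agrees
with `β` on `Z`, so `τ⁻¹β` fixes the nonempty open set `Z` and its support is proper; it also
lies in `ker I` because `I τ = 0`. Hypothesis (ii) writes `τ⁻¹β` as a product of
transpositions, hence so is `β = τ · τ⁻¹β`.
-/

open Set TopologicalSpace

theorem exists_isClopen_mem_image_inter_eq_empty {X : Type*} [TopologicalSpace X] [T2Space X]
    {B : Set (Set X)} (hB : ∀ S ∈ B, IsClopen S) (hbasis : IsTopologicalBasis B)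
    {f : X → X} (hf : Continuous f) {x : X} (hx : f x ≠ x) :
    ∃ Z : Set X, IsClopen Z ∧ x ∈ Z ∧ f '' Z ∩ Z = ∅ := by
  obtain ⟨U, V, hU, hV, hfxU, hxV, hUV⟩ := t2_separation hx
  obtain ⟨Z, hZB, hxZ, hZ⟩ :=
    hbasis.exists_subset_of_mem_open (show x ∈ V ∩ f ⁻¹' U from ⟨hxV, hfxU⟩) (hV.inter (hU.preimage hf))
  refine ⟨Z, hB Z hZB, hxZ, disjoint_iff_inter_eq_empty.1 (hUV.mono ?_ fun z hz => (hZ hz).1)⟩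
  exact image_subset_iff.2 fun z hz => (hZ hz).2

theorem closure_setOf_ne_ne_univ {X : Type*} [TopologicalSpace X] {f : X → X} {Z : Set X}
    (hZ : IsOpen Z) (hne : Z.Nonempty) (hfix : ∀ z ∈ Z, f z = z) :
    closure {x | f x ≠ x} ≠ univ := by
  intro h
  have hsub : closure {x | f x ≠ x} ⊆ Zᶜ :=
    closure_minimal (fun x hx hxZ => hx (hfix x hxZ)) hZ.isClosed_compl
  obtain ⟨z, hz⟩ := hne
  exact hsub (h ▸ mem_univ z) hz

theorem PiecewiseSwap.inv_mul_apply_of_mem {X : Type*} [TopologicalSpace X]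
    {α τ : Homeomorph X X} {Z : Set X} (h : PiecewiseSwap α τ Z) {z : X} (hz : z ∈ Z) :
    (τ⁻¹ * α) z = z := by
  change τ.symm (α z) = z
  rw [← h.1 z hz, Homeomorph.symm_apply_apply]

/-- **Lemma 4.8 of the paper, abstracted.** Let `X` be Hausdorff with a basis of
clopen sets, `Γ` a group of homeomorphisms of `X`, `H` an abelian group and
`I : Γ → H` a group homomorphism. If (i) for every `α ∈ Γ` and clopen `Z` with
`α(Z) ∩ Z = ∅` the transposition `τ_{α,Z}` lies in `Γ` and `I(τ_{α,Z}) = 0`, and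
(ii) every `β ∈ Γ` with `I(β) = 0` whose support is a proper subset of `X` is a
product of such transpositions, then every `β ∈ Γ` with `I(β) = 0` is a product
of such transpositions. -/
theorem stmt5 {X : Type*} [TopologicalSpace X] [T2Space X]
    (hbasis : ∃ B : Set (Set X), (∀ S ∈ B, IsClopen S) ∧
      TopologicalSpace.IsTopologicalBasis B)
    (Γ : Subgroup (Homeomorph X X)) {H : Type*} [AddCommGroup H]
    (I : Γ → H) (hI : ∀ a b : Γ, I (a * b) = I a + I b)
    (h1 : ∀ α, α ∈ Γ → ∀ Z : Set X, IsClopen Z → (α '' Z) ∩ Z = ∅ →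
      ∃ τ : Homeomorph X X, PiecewiseSwap α τ Z ∧ ∃ hτ : τ ∈ Γ, I ⟨τ, hτ⟩ = 0)
    (h2 : ∀ β : Γ, I β = 0 → closure {x | (β : Homeomorph X X) x ≠ x} ≠ Set.univ →
      ∃ l : List (Homeomorph X X), (∀ τ ∈ l, IsTransp Γ τ) ∧ (β : Homeomorph X X) = l.prod) :
    ∀ β : Γ, I β = 0 →
      ∃ l : List (Homeomorph X X), (∀ τ ∈ l, IsTransp Γ τ) ∧ (β : Homeomorph X X) = l.prod := by
  intro β hβ
  by_cases hmove : ∃ x, (β : Homeomorph X X) x ≠ x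
  · obtain ⟨x, hx⟩ := hmove
    obtain ⟨B, hB, hBbasis⟩ := hbasis
    obtain ⟨Z, hZ, hxZ, hdisj⟩ :=
      exists_isClopen_mem_image_inter_eq_empty hB hBbasis (β : Homeomorph X X).continuous hx
    obtain ⟨τ, hswap, hτ, hIτ⟩ := h1 β β.2 Z hZ hdisj
    have hIrest : I ((⟨τ, hτ⟩ : Γ)⁻¹ * β) = 0 := by
      have h := hI ⟨τ, hτ⟩ ((⟨τ, hτ⟩ : Γ)⁻¹ * β)
      rwa [mul_inv_cancel_left, hβ, hIτ, zero_add, eq_comm] at h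
    obtain ⟨l, hl, hprod⟩ := h2 _ hIrest
      (closure_setOf_ne_ne_univ hZ.isOpen ⟨x, hxZ⟩ fun z hz => hswap.inv_mul_apply_of_mem hz)
    refine ⟨τ :: l, List.forall_mem_cons.2 ⟨⟨β, β.2, Z, hZ, hdisj, hswap⟩, hl⟩, ?_⟩
    rw [List.prod_cons, ← hprod, Subgroup.coe_mul, Subgroup.coe_inv, mul_inv_cancel_left]
  · push Not at hmove
    exact ⟨[], by simp, Homeomorph.ext hmove⟩
end

section
/- Let E be a directed graph such that for all vertices u, v of E there exists a path from u to v (E is strongly connected), and suppose that some vertex of E emits at least two distinct edges. Then for every vertex v of E there exist cycles c and c′ based at v (paths of positive length from v to v) such that neither of c and c′ is a prefix of the other. -/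
/-- `l` is (the edge list of) a path in the graph with source and range maps
`σ, ρ`: consecutive edges are composable. -/
def IsPathList {V E₁ : Type*} (σ ρ : E₁ → V) (l : List E₁) : Prop :=
  l.Chain' fun e f => ρ e = σ f

/-- `l` is a path from `u` to `v` (vertices are regarded as paths of length 0). -/
def IsPathFromTo {V E₁ : Type*} (σ ρ : E₁ → V) (u v : V) (l : List E₁) : Prop :=
  IsPathList σ ρ l ∧ (l = [] → u = v) ∧
    (∀ e ∈ l.head?, σ e = u) ∧ (∀ e ∈ l.getLast?, ρ e = v)

section Paths

variable {V E₁ : Type*} {σ ρ : E₁ → V}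

lemma IsPathFromTo.append {a b c : V} {l m : List E₁}
    (hl : IsPathFromTo σ ρ a b l) (hm : IsPathFromTo σ ρ b c m) :
    IsPathFromTo σ ρ a c (l ++ m) := by
  obtain ⟨hcl, hnl, hhl, htl⟩ := hl
  obtain ⟨hcm, hnm, hhm, htm⟩ := hm
  refine ⟨List.isChain_append.mpr
      ⟨hcl, hcm, fun x hx y hy => (htl x hx).trans (hhm y hy).symm⟩,
    fun h => (hnl (List.append_eq_nil_iff.mp h).1).trans (hnm (List.append_eq_nil_iff.mp h).2),
    ?_, ?_⟩
  · rcases l with _ | ⟨x, l⟩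
    · simpa [hnl rfl] using hhm
    · simpa using hhl
  · rcases m with _ | ⟨y, m⟩
    · simpa [hnm rfl] using htl
    · simpa [List.getLast?_append] using htm

lemma IsPathFromTo.cons {u w : V} {e : E₁} {l : List E₁}
    (he : σ e = u) (hl : IsPathFromTo σ ρ (ρ e) w l) :
    IsPathFromTo σ ρ u w (e :: l) := by
  have hsingle : IsPathFromTo σ ρ u (ρ e) [e] :=
    ⟨List.isChain_singleton e, by simp, by simpa using he, by simp⟩
  simpa using hsingle.append hl

end Paths

lemma List.not_prefix_append_cons {α : Type*} (p l₁ l₂ : List α) {a b : α} (hab : a ≠ b) :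
    ¬ p ++ a :: l₁ <+: p ++ b :: l₂ := by
  rw [List.prefix_append_right_inj, List.cons_prefix_cons]
  exact fun h => hab h.1

/-- **Two disjoint cycles at every vertex.** If `E` is strongly connected (for
all vertices `u`, `v` there is a path from `u` to `v`) and some vertex emits at
least two distinct edges, then at every vertex `v` there are two cycles
(paths of positive length from `v` to `v`) neither of which is a prefix of the
other. -/
theorem stmt8 {V E₁ : Type*} (σ ρ : E₁ → V)
    (hconn : ∀ u v : V, ∃ l : List E₁, IsPathFromTo σ ρ u v l)
    (htwo : ∃ u : V, ∃ e f : E₁, e ≠ f ∧ σ e = u ∧ σ f = u) :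
    ∀ v : V, ∃ c c' : List E₁, c ≠ [] ∧ c' ≠ [] ∧
      IsPathFromTo σ ρ v v c ∧ IsPathFromTo σ ρ v v c' ∧
      ¬ c <+: c' ∧ ¬ c' <+: c := by
  intro v
  obtain ⟨u, e, f, hef, he, hf⟩ := htwo
  obtain ⟨p, hp⟩ := hconn v u
  obtain ⟨q, hq⟩ := hconn (ρ e) v
  obtain ⟨q', hq'⟩ := hconn (ρ f) v
  exact ⟨p ++ e :: q, p ++ f :: q', by simp, by simp, hp.append (hq.cons he),
    hp.append (hq'.cons hf), List.not_prefix_append_cons p q q' hef,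
    List.not_prefix_append_cons p q' q hef.symm⟩
end
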